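/- Let Qₙ(·|x) and Q(·|x) be transition kernels from a metric space X to a Polish space S such that for every bounded continuous u: S → ℝ, the maps x ↦ ∫ u dQₙ(·|x) converge continuously to x ↦ ∫ u dQ(·|x) (i.e., whenever xₙ → x, ∫ u dQₙ(·|xₙ) → ∫ u dQ(·|x)). If ηₙ ⇒ η weakly in Δ(X), then the measures νₙ(·) := ∫_X Qₙ(·|x) ηₙ(dx) converge weakly to ν(·) := ∫_X Q(·|x) η(dx). -/

import Mathlib

/-! Continuous convergence of `gₙ` to `G` on a first-countable space is convergence along
`atTop ×ˢ 𝓝 x` at every `x`; it makes `G` continuous and the convergence locally uniform.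
Hence the open sets `U N = interior {y | ∀ n ≥ N, |gₙ y - G y| ≤ ε}` increase to the whole space,
and by the portmanteau theorem `ηₙ (U N)ᶜ` is eventually small for some `N`, which forces
`∫ (gₙ - G) dηₙ → 0`; weak convergence gives `∫ G dηₙ → ∫ G dη`. For the theorem take
`gₙ x = ∫ f dQₙ(·|x)`, and use `∫ f dνₙ = ∫ gₙ dηₙ`. -/

open MeasureTheory Filter Topology BoundedContinuousFunction ProbabilityTheory Set
open scoped ENNReal

section ContinuousConvergence

variable {X β : Type*} [TopologicalSpace X] [TopologicalSpace β] {g : ℕ → X → β} {G : X → β}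

theorem tendsto_prod_atTop_nhds_of_seq [FirstCountableTopology X]
    (hg : ∀ (xs : ℕ → X) (x : X), Tendsto xs atTop (𝓝 x) →
      Tendsto (fun n => g n (xs n)) atTop (𝓝 (G x)))
    (x : X) : Tendsto (fun p : ℕ × X => g p.1 p.2) (atTop ×ˢ 𝓝 x) (𝓝 (G x)) := by
  by_contra h
  obtain ⟨V, hV, hfreq⟩ := not_tendsto_iff_exists_frequently_notMem.1 h
  obtain ⟨B, hB⟩ := (𝓝 x).exists_antitone_basis
  have hk : ∀ k, ∃ᶠ n in atTop, ∃ y ∈ B k, g n y ∉ V := fun k =>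
    frequently_atTop.2 fun N => by
      obtain ⟨⟨n, y⟩, hgV, hn, hy⟩ :=
        (hfreq.and_eventually (prod_mem_prod (Ici_mem_atTop N) (hB.mem k))).exists
      exact ⟨n, hn, y, hy, hgV⟩
  obtain ⟨φ, hφ, hφV⟩ := extraction_forall_of_frequently hk
  choose y hyB hyV using hφV
  obtain ⟨xs, hxs_φ, hxs_x⟩ :
      ∃ xs : ℕ → X, (∀ j, xs (φ j) = y j) ∧ ∀ m, (¬∃ j, φ j = m) → xs m = x :=
    ⟨Function.extend φ y fun _ => x, hφ.injective.extend_apply _ _,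
      fun m hm => Function.extend_apply' _ _ _ hm⟩
  have hxs : Tendsto xs atTop (𝓝 x) := by
    refine hB.tendsto_right_iff.2 fun k _ => eventually_atTop.2 ⟨φ k, fun m hm => ?_⟩
    by_cases hm' : ∃ j, φ j = m
    · obtain ⟨j, rfl⟩ := hm'
      rw [hxs_φ]
      exact hB.antitone (hφ.le_iff_le.1 hm) (hyB j)
    · rw [hxs_x m hm']
      exact mem_of_mem_nhds (hB.mem k)
  obtain ⟨k, hkV⟩ := (((hg xs x hxs).comp hφ.tendsto_atTop).eventually hV).exists
  rw [Function.comp_apply, hxs_φ] at hkV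
  exact hyV k hkV

variable (hg : ∀ x, Tendsto (fun p : ℕ × X => g p.1 p.2) (atTop ×ˢ 𝓝 x) (𝓝 (G x)))
include hg

theorem tendsto_apply_of_tendsto_prod_atTop_nhds (x : X) :
    Tendsto (fun n => g n x) atTop (𝓝 (G x)) :=
  (hg x).comp (tendsto_id.prodMk tendsto_const_nhds)

theorem continuous_of_tendsto_prod_atTop_nhds [RegularSpace β] : Continuous G := by
  refine continuous_iff_continuousAt.2 fun x => (closed_nhds_basis (G x)).tendsto_right_iff.2 ?_
  rintro V ⟨hV, hVc⟩
  obtain ⟨p, hp, q, hq, hpq⟩ := eventually_prod_iff.1 (hg x hV)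
  filter_upwards [hq] with y hy
  exact hVc.mem_of_tendsto (tendsto_apply_of_tendsto_prod_atTop_nhds hg y)
    (hp.mono fun n hn => hpq hn hy)

end ContinuousConvergence

theorem tendstoLocallyUniformly_of_tendsto_prod_atTop_nhds {X β : Type*} [TopologicalSpace X]
    [UniformSpace β] {g : ℕ → X → β} {G : X → β}
    (hg : ∀ x, Tendsto (fun p : ℕ × X => g p.1 p.2) (atTop ×ˢ 𝓝 x) (𝓝 (G x))) :
    TendstoLocallyUniformly g G atTop := by
  refine (tendstoLocallyUniformly_iff_filter).2 fun x => tendstoUniformlyOnFilter_iff_tendsto.2 ?_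
  exact ((((continuous_of_tendsto_prod_atTop_nhds hg).tendsto x).comp tendsto_snd).prodMk_nhds
    (hg x)).mono_right (nhds_le_uniformity _)

theorem MeasureTheory.Measure.integral_bind {α β E : Type*} [MeasurableSpace α]
    [MeasurableSpace β] [NormedAddCommGroup E] [NormedSpace ℝ E] {μ : Measure α} [SFinite μ]
    {κ : Kernel α β} [IsSFiniteKernel κ] {f : β → E} (hf : Integrable f (κ ∘ₘ μ)) :
    ∫ y, f y ∂(κ ∘ₘ μ) = ∫ x, ∫ y, f y ∂κ x ∂μ := by
  rw [Measure.comp_eq_comp_const_apply] at hf ⊢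
  rw [Kernel.integral_comp hf, Kernel.const_apply]

theorem BoundedContinuousFunction.integral_bind {α β : Type*} [MeasurableSpace α]
    [TopologicalSpace β] [MeasurableSpace β] [OpensMeasurableSpace β] {μ : Measure α}
    [IsProbabilityMeasure μ] {P : α → Measure β} (hP : Measurable P)
    (hPp : ∀ x, IsProbabilityMeasure (P x)) (f : β →ᵇ ℝ) :
    ∫ y, f y ∂(μ.bind P) = ∫ x, ∫ y, f y ∂(P x) ∂μ :=
  have : IsMarkovKernel (⟨P, hP⟩ : Kernel α β) := ⟨hPp⟩
  have := isProbabilityMeasure_bind (m := μ) hP.aemeasurable (.of_forall hPp)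
  Measure.integral_bind (κ := ⟨P, hP⟩) (f.integrable _)

theorem norm_integral_le_of_norm_le_on_of_norm_le {α E : Type*} [MeasurableSpace α]
    [NormedAddCommGroup E] [NormedSpace ℝ E] {ν : Measure α} [IsFiniteMeasure ν]
    {f : α → E} {U : Set α} (hU : MeasurableSet U) {ε M : ℝ}
    (hfU : ∀ x ∈ U, ‖f x‖ ≤ ε) (hfM : ∀ x, ‖f x‖ ≤ M) :
    ‖∫ x, f x ∂ν‖ ≤ ε * ν.real U + M * ν.real Uᶜ := by
  have hbound : ∀ x, ‖f x‖ ≤ U.indicator (fun _ => ε) x + Uᶜ.indicator (fun _ => M) x := by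
    intro x
    by_cases hx : x ∈ U
    · simpa [hx] using hfU x hx
    · simpa [hx] using hfM x
  have hint : ∀ {s : Set α} (c : ℝ), MeasurableSet s → Integrable (s.indicator fun _ => c) ν :=
    fun c hs => (integrable_const c).indicator hs
  calc ‖∫ x, f x ∂ν‖ ≤ ∫ x, ‖f x‖ ∂ν := norm_integral_le_integral_norm f
    _ ≤ ∫ x, U.indicator (fun _ => ε) x + Uᶜ.indicator (fun _ => M) x ∂ν :=
      integral_mono_of_nonneg (.of_forall fun _ => norm_nonneg _)
        ((hint ε hU).add (hint M hU.compl)) (.of_forall hbound)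
    _ = ε * ν.real U + M * ν.real Uᶜ := by
      rw [integral_add (hint ε hU) (hint M hU.compl), integral_indicator_const ε hU,
        integral_indicator_const M hU.compl, smul_eq_mul, smul_eq_mul, mul_comm ε, mul_comm M]

theorem MeasureTheory.ProbabilityMeasure.exists_eventually_measure_compl_lt {X ι : Type*}
    [MeasurableSpace X] [TopologicalSpace X] [OpensMeasurableSpace X] [HasOuterApproxClosed X]
    {L : Filter ι} {μs : ι → ProbabilityMeasure X} {μ : ProbabilityMeasure X}
    (hμ : Tendsto μs L (𝓝 μ))
    {U : ℕ → Set X} (hU : ∀ N, IsOpen (U N)) (hmono : Monotone U) (hcover : ⋃ N, U N = univ)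
    {ε : ℝ≥0∞} (hε : 0 < ε) : ∃ N, ∀ᶠ i in L, (μs i : Measure X) (U N)ᶜ < ε := by
  have hlim : Tendsto (fun N => (μ : Measure X) (U N)ᶜ) atTop (𝓝 0) := by
    have := tendsto_measure_iInter_atTop (μ := (μ : Measure X))
      (fun N => (hU N).isClosed_compl.measurableSet.nullMeasurableSet)
      (fun _ _ h => compl_subset_compl.2 (hmono h)) ⟨0, measure_ne_top _ _⟩
    rwa [← compl_iUnion, hcover, compl_univ, measure_empty] at this
  obtain ⟨N, hN⟩ := ((tendsto_order.1 hlim).2 ε hε).exists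
  exact ⟨N, eventually_lt_of_limsup_lt
    ((ProbabilityMeasure.limsup_measure_closed_le_of_tendsto hμ (hU N).isClosed_compl).trans_lt hN)⟩

theorem tendsto_integral_sub_of_tendstoLocallyUniformly {X : Type*} [MeasurableSpace X]
    [TopologicalSpace X] [OpensMeasurableSpace X] [HasOuterApproxClosed X]
    {μs : ℕ → ProbabilityMeasure X} {μ : ProbabilityMeasure X} (hμ : Tendsto μs atTop (𝓝 μ))
    {g : ℕ → X → ℝ} {G : X → ℝ} {C : ℝ} (hgb : ∀ n x, ‖g n x‖ ≤ C) (hGb : ∀ x, ‖G x‖ ≤ C)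
    (hlu : TendstoLocallyUniformly g G atTop) :
    Tendsto (fun n => ∫ x, (g n x - G x) ∂(μs n : Measure X)) atTop (𝓝 0) := by
  have hC : 0 ≤ C :=
    (norm_nonneg _).trans (hGb (nonempty_of_isProbabilityMeasure (μ : Measure X)).some)
  refine Metric.tendsto_nhds.2 fun δ hδ => ?_
  obtain ⟨r, hr, hCr⟩ := exists_pos_mul_lt (half_pos hδ) (2 * C)
  set U : ℕ → Set X := fun N => interior {y | ∀ n ≥ N, dist (g n y) (G y) ≤ δ / 2}
  have hmono : Monotone U := fun N M hNM =>
    interior_mono fun y hy n hn => hy n (hNM.trans hn)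
  have hcover : ⋃ N, U N = univ := by
    refine eq_univ_of_forall fun x => ?_
    obtain ⟨t, ht, hevent⟩ := Metric.tendstoLocallyUniformly_iff.1 hlu (δ / 2) (by positivity) x
    obtain ⟨N, hN⟩ := eventually_atTop.1 hevent
    exact mem_iUnion.2 ⟨N, mem_interior_iff_mem_nhds.2 <| mem_of_superset ht fun y hy n hn =>
      by rw [dist_comm]; exact (hN n hn y hy).le⟩
  obtain ⟨N, hN⟩ := ProbabilityMeasure.exists_eventually_measure_compl_lt hμ
    (fun _ => isOpen_interior) hmono hcover (ENNReal.ofReal_pos.2 hr)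
  filter_upwards [hN, eventually_ge_atTop N] with n hn hNn
  have hUn : ∀ y ∈ U N, ‖g n y - G y‖ ≤ δ / 2 := fun y hy =>
    (dist_eq_norm _ _).symm.trans_le (interior_subset hy n hNn)
  have hUc : (μs n : Measure X).real (U N)ᶜ < r := ENNReal.toReal_lt_of_lt_ofReal hn
  rw [dist_zero_right]
  calc ‖∫ x, (g n x - G x) ∂(μs n : Measure X)‖
      ≤ δ / 2 * (μs n : Measure X).real (U N) + (C + C) * (μs n : Measure X).real (U N)ᶜ :=
        norm_integral_le_of_norm_le_on_of_norm_le isOpen_interior.measurableSet hUn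
          fun y => (norm_sub_le _ _).trans (add_le_add (hgb n y) (hGb y))
    _ ≤ δ / 2 * 1 + 2 * C * r := by
        gcongr
        · exact measureReal_le_one
        · linarith
    _ < δ := by linarith

theorem tendsto_integral_of_tendsto_prod_atTop_nhds {X : Type*} [MeasurableSpace X]
    [TopologicalSpace X] [OpensMeasurableSpace X] [HasOuterApproxClosed X]
    {μs : ℕ → ProbabilityMeasure X} {μ : ProbabilityMeasure X} (hμ : Tendsto μs atTop (𝓝 μ))
    {g : ℕ → X → ℝ} {G : X → ℝ} {C : ℝ} (hgm : ∀ n, AEStronglyMeasurable (g n) (μs n))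
    (hgb : ∀ n x, ‖g n x‖ ≤ C)
    (hg : ∀ x, Tendsto (fun p : ℕ × X => g p.1 p.2) (atTop ×ˢ 𝓝 x) (𝓝 (G x))) :
    Tendsto (fun n => ∫ x, g n x ∂(μs n : Measure X)) atTop (𝓝 (∫ x, G x ∂(μ : Measure X))) := by
  have hG := continuous_of_tendsto_prod_atTop_nhds hg
  have hGb : ∀ x, ‖G x‖ ≤ C := fun x =>
    le_of_tendsto (tendsto_apply_of_tendsto_prod_atTop_nhds hg x).norm
      (.of_forall fun n => hgb n x)
  have hGμ :
      Tendsto (fun n => ∫ x, G x ∂(μs n : Measure X)) atTop (𝓝 (∫ x, G x ∂(μ : Measure X))) :=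
    ProbabilityMeasure.tendsto_iff_forall_integral_tendsto.1 hμ (.ofNormedAddCommGroup G hG C hGb)
  have hdiff := tendsto_integral_sub_of_tendstoLocallyUniformly hμ hgb hGb
    (tendstoLocallyUniformly_of_tendsto_prod_atTop_nhds hg)
  refine (zero_add (∫ x, G x ∂(μ : Measure X)) ▸ hdiff.add hGμ).congr fun n => ?_
  rw [integral_sub (.of_bound (hgm n) C (.of_forall (hgb n)))
    (.of_bound hG.aestronglyMeasurable C (.of_forall hGb)), sub_add_cancel]

/-- Serfozo-type result: if the kernels Qₙ converge continuously to Q (in the weak sense)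
and ηₙ ⇒ η, then the mixtures νₙ = ∫ Qₙ dηₙ converge weakly to ν = ∫ Q dη. -/
theorem stmt17 {X S : Type*} [MetricSpace X] [MeasurableSpace X] [BorelSpace X]
    [MetricSpace S] [MeasurableSpace S] [BorelSpace S]
    (Qn : ℕ → X → Measure S) (Q : X → Measure S)
    (hQnm : ∀ n, Measurable (Qn n)) (hQm : Measurable Q)
    (hQnp : ∀ n x, IsProbabilityMeasure (Qn n x)) (hQp : ∀ x, IsProbabilityMeasure (Q x))
    (hcc : ∀ u : S →ᵇ ℝ, ∀ (xs : ℕ → X) (x : X), Tendsto xs atTop (𝓝 x) →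
      Tendsto (fun n => ∫ s, u s ∂(Qn n (xs n))) atTop (𝓝 (∫ s, u s ∂(Q x))))
    (ηn : ℕ → Measure X) (η : Measure X)
    (hηnp : ∀ n, IsProbabilityMeasure (ηn n)) [IsProbabilityMeasure η]
    (hweak : ∀ f : X →ᵇ ℝ,
      Tendsto (fun n => ∫ x, f x ∂(ηn n)) atTop (𝓝 (∫ x, f x ∂η))) :
    ∀ f : S →ᵇ ℝ,
      Tendsto (fun n => ∫ s, f s ∂((ηn n).bind (Qn n)))
        atTop (𝓝 (∫ s, f s ∂(η.bind Q))) := by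
  intro f
  let μs : ℕ → ProbabilityMeasure X := fun n => ⟨ηn n, hηnp n⟩
  have hμ : Tendsto μs atTop (𝓝 ⟨η, inferInstance⟩) :=
    ProbabilityMeasure.tendsto_iff_forall_integral_tendsto.2 hweak
  have hbind n : ∫ s, f s ∂((ηn n).bind (Qn n)) = ∫ x, ∫ s, f s ∂(Qn n x) ∂(μs n : Measure X) :=
    have := hηnp n
    f.integral_bind (hQnm n) (hQnp n)
  simp only [hbind, f.integral_bind hQm hQp]
  refine tendsto_integral_of_tendsto_prod_atTop_nhds hμ (C := ‖f‖) (fun n => ?_) (fun n x => ?_)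
    (tendsto_prod_atTop_nhds_of_seq (g := fun n x => ∫ s, f s ∂(Qn n x)) (hcc f))
  · exact (f.continuous.stronglyMeasurable.integral_kernel
      (κ := ⟨Qn n, hQnm n⟩)).aestronglyMeasurable
  · have := hQnp n x
    exact f.norm_integral_le_norm _
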